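/- arXiv:1111.4593 — 2 statements merged into one kernel-verified Lean document; each statement's English description precedes it below -/
import Mathlib

section
/- Let p be the heat kernel of a lazy, irreducible, reversible random walk on a connected weighted graph with weights bounded above and below. Then for any two vertices x, y, the ratio p(x,x;t)/p(y,y;t) is bounded above and below by positive constants independent of t (for t at least the graph distance from x to y, doubled). -/
open scoped Classical

noncomputable def wStep {V : Type} (w : V → V → ℝ) (N : V → Finset V) (u v : V) : ℝ :=
  (if u = v then (1 : ℝ) / 2 else 0) + w u v / (2 * ∑ z ∈ N u, w u z)

noncomputable def wKernel {V : Type} (w : V → V → ℝ) (N : V → Finset V) :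
    ℕ → V → V → ℝ
  | 0, u, v => if u = v then 1 else 0
  | t + 1, u, v => ∑ z ∈ insert u (N u), wStep w N u z * wKernel w N t z v

namespace WAux

variable {V : Type} (w : V → V → ℝ) (N : V → Finset V)

noncomputable def piw (u : V) : ℝ := ∑ z ∈ N u, w u z

lemma piw_nonneg (hnn : ∀ u v, 0 ≤ w u v) (u : V) : 0 ≤ piw w N u :=
  Finset.sum_nonneg fun z _ => hnn u z

lemma step_nonneg (hnn : ∀ u v, 0 ≤ w u v) (u v : V) : 0 ≤ wStep w N u v := by
  unfold wStep
  have h1 : 0 ≤ w u v / (2 * ∑ z ∈ N u, w u z) :=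
    div_nonneg (hnn u v) (by
      have := piw_nonneg w N hnn u
      unfold piw at this; linarith)
  have h2 : (0:ℝ) ≤ (if u = v then (1:ℝ)/2 else 0) := by split <;> norm_num
  linarith

lemma kernel_nonneg (hnn : ∀ u v, 0 ≤ w u v) (t : ℕ) (u v : V) :
    0 ≤ wKernel w N t u v := by
  induction t generalizing u with
  | zero => simp only [wKernel]; split <;> norm_num
  | succ t ih =>
    simp only [wKernel]
    exact Finset.sum_nonneg fun z _ => mul_nonneg (step_nonneg w N hnn u z) (ih z)

lemma not_mem_self (hloop : ∀ u, w u u = 0) (hsupp : ∀ u v, v ∈ N u ↔ w u v ≠ 0)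
    (u : V) : u ∉ N u := by
  intro h; exact (hsupp u u).1 h (hloop u)

lemma step_self (hloop : ∀ u, w u u = 0) (u : V) : wStep w N u u = 1/2 := by
  simp [wStep, hloop u]

lemma step_eq_zero (hsupp : ∀ u v, v ∈ N u ↔ w u v ≠ 0)
    {u v : V} (h : v ∉ insert u (N u)) : wStep w N u v = 0 := by
  simp only [Finset.mem_insert, not_or] at h
  have hw : w u v = 0 := by
    by_contra hw; exact h.2 ((hsupp u v).2 hw)
  simp [wStep, hw, Ne.symm h.1]

lemma mem_insert_symm (hsymm : ∀ u v, w u v = w v u)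
    (hsupp : ∀ u v, v ∈ N u ↔ w u v ≠ 0) {u v : V} :
    u ∈ insert v (N v) ↔ v ∈ insert u (N u) := by
  simp only [Finset.mem_insert, hsupp]
  rw [hsymm v u]
  constructor
  · rintro (h | h)
    exacts [Or.inl h.symm, Or.inr h]
  · rintro (h | h)
    exacts [Or.inl h.symm, Or.inr h]

lemma step_last (hsymm : ∀ u v, w u v = w v u) (hloop : ∀ u, w u u = 0)
    (hsupp : ∀ u v, v ∈ N u ↔ w u v ≠ 0) (t : ℕ) (u v : V) :
    wKernel w N (t+1) u v = ∑ z ∈ insert v (N v), wKernel w N t u z * wStep w N z v := by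
  induction t generalizing u v with
  | zero =>
    simp only [wKernel]
    have h0 : ∀ z ∈ insert u (N u), wStep w N u z * (if z = v then (1:ℝ) else 0)
        = if z = v then wStep w N u v else 0 := by
      intro z _
      by_cases h : z = v
      · subst h; simp
      · simp [h]
    rw [Finset.sum_congr rfl h0,
      Finset.sum_ite_eq' (insert u (N u)) v (fun _ => wStep w N u v)]
    have : ∀ z ∈ insert v (N v), (if u = z then (1:ℝ) else 0) * wStep w N z v
        = if z = u then wStep w N u v else 0 := by
      intro z hz
      by_cases h : z = u
      · subst h; simp
      · simp [h, Ne.symm h]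
    rw [Finset.sum_congr rfl this, Finset.sum_ite_eq' (insert v (N v)) u (fun _ => wStep w N u v)]
    by_cases h1 : v ∈ insert u (N u)
    · rw [if_pos h1, if_pos ((mem_insert_symm w N hsymm hsupp).2 h1)]
    · rw [if_neg h1, if_neg (fun h2 => h1 ((mem_insert_symm w N hsymm hsupp).1 h2))]
  | succ t ih =>
    show (∑ z' ∈ insert u (N u), wStep w N u z' * wKernel w N (t+1) z' v) = _
    have : ∀ z' ∈ insert u (N u), wStep w N u z' * wKernel w N (t+1) z' v
        = ∑ z ∈ insert v (N v), wStep w N u z' * (wKernel w N t z' z * wStep w N z v) := by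
      intro z' _
      rw [ih z' v, Finset.mul_sum]
    rw [Finset.sum_congr rfl this, Finset.sum_comm]
    apply Finset.sum_congr rfl
    intro z _
    show _ = wKernel w N (t+1) u z * wStep w N z v
    simp only [wKernel, Finset.sum_mul]
    apply Finset.sum_congr rfl
    intro z' _; ring

end WAux

namespace WAux

variable {V : Type} (w : V → V → ℝ) (N : V → Finset V)

lemma detailed (hsymm : ∀ u v, w u v = w v u) (hπ : ∀ u, 0 < piw w N u) (u v : V) :
    piw w N u * wStep w N u v = piw w N v * wStep w N v u := by
  unfold wStep
  have hu := (hπ u).ne'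
  have hv := (hπ v).ne'
  unfold piw at *
  by_cases h : u = v
  · subst h; ring
  · rw [if_neg h, if_neg (Ne.symm h)]
    field_simp
    rw [hsymm u v]; ring

lemma reversible (hsymm : ∀ u v, w u v = w v u) (hloop : ∀ u, w u u = 0)
    (hsupp : ∀ u v, v ∈ N u ↔ w u v ≠ 0) (hπ : ∀ u, 0 < piw w N u) (t : ℕ) (u v : V) :
    piw w N u * wKernel w N t u v = piw w N v * wKernel w N t v u := by
  induction t generalizing u v with
  | zero =>
    simp only [wKernel]
    by_cases h : u = v
    · subst h; rfl
    · rw [if_neg h, if_neg (Ne.symm h)]; ring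
  | succ t ih =>
    show piw w N u * (∑ z ∈ insert u (N u), wStep w N u z * wKernel w N t z v) = _
    rw [Finset.mul_sum]
    have : ∀ z ∈ insert u (N u), piw w N u * (wStep w N u z * wKernel w N t z v)
        = piw w N v * (wKernel w N t v z * wStep w N z u) := by
      intro z _
      have h1 : piw w N u * wStep w N u z = piw w N z * wStep w N z u :=
        detailed w N hsymm hπ u z
      have h2 : piw w N z * wKernel w N t z v = piw w N v * wKernel w N t v z := ih z v
      have hz := (hπ z).ne'
      calc piw w N u * (wStep w N u z * wKernel w N t z v)
          = (piw w N u * wStep w N u z) * wKernel w N t z v := by ring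
        _ = (piw w N z * wStep w N z u) * wKernel w N t z v := by rw [h1]
        _ = (piw w N z * wKernel w N t z v) * wStep w N z u := by ring
        _ = (piw w N v * wKernel w N t v z) * wStep w N z u := by rw [h2]
        _ = piw w N v * (wKernel w N t v z * wStep w N z u) := by ring
    rw [Finset.sum_congr rfl this, ← Finset.mul_sum,
      ← step_last w N hsymm hloop hsupp t v u]

/-- ball of radius m around u -/
noncomputable def ball : ℕ → V → Finset V
  | 0, u => {u}
  | m+1, u => (ball m u).biUnion (fun z => insert z (N z))

lemma mem_ball_self (m : ℕ) (u : V) : u ∈ ball N m u := by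
  induction m with
  | zero => simp [ball]
  | succ m ih =>
    simp only [ball, Finset.mem_biUnion]
    exact ⟨u, ih, Finset.mem_insert_self u (N u)⟩

lemma ball_subset_succ (m : ℕ) (u : V) : ball N m u ⊆ ball N (m+1) u := by
  induction m with
  | zero =>
    intro z hz
    simp only [ball, Finset.mem_singleton] at hz
    subst hz
    exact mem_ball_self N 1 z
  | succ m ih =>
    show ball N (m+1) u ⊆ ball N (m+2) u
    simp only [ball]
    exact Finset.biUnion_subset_biUnion_of_subset_left _ ih

lemma ball_mono {m n : ℕ} (h : m ≤ n) (u : V) : ball N m u ⊆ ball N n u := by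
  induction n with
  | zero => rw [Nat.le_zero.1 h]
  | succ n ih =>
    rcases Nat.lt_or_ge m (n+1) with h1 | h1
    · exact (ih (Nat.lt_succ_iff.1 h1)).trans (ball_subset_succ N n u)
    · rw [Nat.le_antisymm h h1]

lemma support (hsymm : ∀ u v, w u v = w v u) (hloop : ∀ u, w u u = 0)
    (hsupp : ∀ u v, v ∈ N u ↔ w u v ≠ 0) (t : ℕ) (u v : V)
    (h : wKernel w N t u v ≠ 0) : v ∈ ball N t u := by
  induction t generalizing v with
  | zero =>
    simp only [wKernel] at h
    have : u = v := by by_contra hc; rw [if_neg hc] at h; exact h rfl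
    subst this; exact mem_ball_self N 0 u
  | succ t ih =>
    rw [step_last w N hsymm hloop hsupp] at h
    obtain ⟨z, hz, hne⟩ := Finset.exists_ne_zero_of_sum_ne_zero h
    have h1 : wKernel w N t u z ≠ 0 := fun h0 => hne (by rw [h0]; ring)
    have h2 : z ∈ ball N t u := ih z h1
    simp only [ball, Finset.mem_biUnion]
    exact ⟨z, h2, (mem_insert_symm w N hsymm hsupp).2 hz⟩

lemma chapman (hsymm : ∀ u v, w u v = w v u) (hloop : ∀ u, w u u = 0)
    (hsupp : ∀ u v, v ∈ N u ↔ w u v ≠ 0) (m n : ℕ) (u v : V) (F : Finset V)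
    (hF : ball N m u ⊆ F) :
    wKernel w N (m+n) u v = ∑ z ∈ F, wKernel w N m u z * wKernel w N n z v := by
  induction n generalizing v with
  | zero =>
    have : ∀ z ∈ F, wKernel w N m u z * wKernel w N 0 z v
        = if z = v then wKernel w N m u v else 0 := by
      intro z _
      show wKernel w N m u z * (if z = v then (1:ℝ) else 0) = _
      by_cases h : z = v
      · subst h; simp
      · simp [h]
    rw [Finset.sum_congr rfl this, Finset.sum_ite_eq' F v (fun _ => wKernel w N m u v)]
    by_cases h : v ∈ F
    · rw [if_pos h]; norm_num
    · rw [if_neg h]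
      show wKernel w N (m+0) u v = 0
      norm_num
      by_contra hc
      exact h (hF (support w N hsymm hloop hsupp m u v (by simpa using hc)))
  | succ n ih =>
    have e1 : m + (n+1) = (m+n) + 1 := by ring
    rw [e1, step_last w N hsymm hloop hsupp]
    have : ∀ z ∈ insert v (N v), wKernel w N (m+n) u z * wStep w N z v
        = ∑ z' ∈ F, wKernel w N m u z' * (wKernel w N n z' z * wStep w N z v) := by
      intro z _
      rw [ih z, Finset.sum_mul]
      apply Finset.sum_congr rfl; intro z' _; ring
    rw [Finset.sum_congr rfl this, Finset.sum_comm]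
    apply Finset.sum_congr rfl
    intro z' _
    rw [← Finset.mul_sum, ← step_last w N hsymm hloop hsupp]

end WAux

namespace WAux

variable {V : Type} (w : V → V → ℝ) (N : V → Finset V)

lemma row_sum (hloop : ∀ u, w u u = 0) (hsupp : ∀ u v, v ∈ N u ↔ w u v ≠ 0)
    (hπ : ∀ u, 0 < piw w N u) (u : V) :
    ∑ z ∈ insert u (N u), wStep w N u z = 1 := by
  unfold wStep
  rw [Finset.sum_add_distrib]
  have h1 : ∑ z ∈ insert u (N u), (if u = z then (1:ℝ)/2 else 0) = 1/2 := by
    have : ∀ z ∈ insert u (N u), (if u = z then (1:ℝ)/2 else 0)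
        = if z = u then (1:ℝ)/2 else 0 := by
      intro z _; by_cases h : z = u
      · simp [h]
      · simp [h, Ne.symm h]
    rw [Finset.sum_congr rfl this, Finset.sum_ite_eq' (insert u (N u)) u fun _ => (1:ℝ)/2,
      if_pos (Finset.mem_insert_self u (N u))]
  have h2 : ∑ z ∈ insert u (N u), w u z / (2 * ∑ z ∈ N u, w u z) = 1/2 := by
    rw [← Finset.sum_div]
    rw [Finset.sum_insert (not_mem_self w N hloop hsupp u), hloop u, zero_add]
    have := (hπ u).ne'
    unfold piw at this
    field_simp
  rw [h1, h2]; norm_num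

lemma kernel_le_one (hnn : ∀ u v, 0 ≤ w u v) (hloop : ∀ u, w u u = 0)
    (hsupp : ∀ u v, v ∈ N u ↔ w u v ≠ 0) (hπ : ∀ u, 0 < piw w N u)
    (t : ℕ) (u v : V) : wKernel w N t u v ≤ 1 := by
  induction t generalizing u with
  | zero => simp only [wKernel]; split <;> norm_num
  | succ t ih =>
    show (∑ z ∈ insert u (N u), wStep w N u z * wKernel w N t z v) ≤ 1
    calc (∑ z ∈ insert u (N u), wStep w N u z * wKernel w N t z v)
        ≤ ∑ z ∈ insert u (N u), wStep w N u z := by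
          apply Finset.sum_le_sum
          intro z _
          have := step_nonneg w N hnn u z
          nlinarith [ih z, kernel_nonneg w N hnn t z v]
      _ = 1 := row_sum w N hloop hsupp hπ u

lemma half_le_succ (hnn : ∀ u v, 0 ≤ w u v) (hloop : ∀ u, w u u = 0)
    (t : ℕ) (u v : V) :
    (1/2) * wKernel w N t u v ≤ wKernel w N (t+1) u v := by
  show _ ≤ ∑ z ∈ insert u (N u), wStep w N u z * wKernel w N t z v
  have h := Finset.single_le_sum (f := fun z => wStep w N u z * wKernel w N t z v)
    (fun z _ => mul_nonneg (step_nonneg w N hnn u z) (kernel_nonneg w N hnn t z v))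
    (Finset.mem_insert_self u (N u))
  rw [step_self w N hloop u] at h
  linarith

lemma diag_pos (hnn : ∀ u v, 0 ≤ w u v) (hloop : ∀ u, w u u = 0)
    (t : ℕ) (u : V) : 0 < wKernel w N t u u := by
  induction t with
  | zero => simp [wKernel]
  | succ t ih =>
    have := half_le_succ w N hnn hloop t u u
    linarith

lemma pick_term (hsymm : ∀ u v, w u v = w v u) (hnn : ∀ u v, 0 ≤ w u v)
    (hloop : ∀ u, w u u = 0) (hsupp : ∀ u v, v ∈ N u ↔ w u v ≠ 0)
    (m n : ℕ) (u v x : V) :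
    wKernel w N m u x * wKernel w N n x v ≤ wKernel w N (m+n) u v := by
  by_cases h : x ∈ ball N m u
  · rw [chapman w N hsymm hloop hsupp m n u v (ball N m u) (le_refl _)]
    exact Finset.single_le_sum (f := fun z => wKernel w N m u z * wKernel w N n z v)
      (fun z _ => mul_nonneg (kernel_nonneg w N hnn m u z) (kernel_nonneg w N hnn n z v)) h
  · have : wKernel w N m u x = 0 := by
      by_contra hc; exact h (support w N hsymm hloop hsupp m u x hc)
    rw [this, zero_mul]
    exact kernel_nonneg w N hnn (m+n) u v

end WAux

namespace WAux

variable {V : Type} (w : V → V → ℝ) (N : V → Finset V)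

lemma wrow_le (hnn : ∀ u v, 0 ≤ w u v) (hsupp : ∀ u v, v ∈ N u ↔ w u v ≠ 0)
    (F : Finset V) (z : V) : ∑ z' ∈ F, w z z' ≤ piw w N z := by
  have h1 : ∑ z' ∈ F, w z z' = ∑ z' ∈ F.filter (fun z' => w z z' ≠ 0), w z z' :=
    (Finset.sum_filter_ne_zero F).symm
  rw [h1]
  apply Finset.sum_le_sum_of_subset_of_nonneg
  · intro i hi
    simp only [Finset.mem_filter] at hi
    exact (hsupp z i).2 hi.2
  · intro i _ _; exact hnn z i

lemma offdiag_ge (hsymm : ∀ u v, w u v = w v u) (hnn : ∀ u v, 0 ≤ w u v)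
    (hsupp : ∀ u v, v ∈ N u ↔ w u v ≠ 0) (F : Finset V) (h : V → ℝ) :
    -∑ z ∈ F, piw w N z * (h z * h z) ≤ ∑ z ∈ F, ∑ z' ∈ F, w z z' * h z * h z' := by
  set S1 : ℝ := ∑ z ∈ F, (∑ z' ∈ F, w z z') * (h z * h z) with hS1
  have pt : ∀ z z' : V, -(w z z' * (h z * h z) / 2 + w z z' * (h z' * h z') / 2)
      ≤ w z z' * h z * h z' := by
    intro z z'
    nlinarith [hnn z z', sq_nonneg (h z + h z')]
  have hsum : ∑ z ∈ F, ∑ z' ∈ F, -(w z z' * (h z * h z) / 2 + w z z' * (h z' * h z') / 2)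
      ≤ ∑ z ∈ F, ∑ z' ∈ F, w z z' * h z * h z' :=
    Finset.sum_le_sum fun z _ => Finset.sum_le_sum fun z' _ => pt z z'
  refine le_trans ?_ hsum
  have e1 : ∑ z ∈ F, ∑ z' ∈ F, w z z' * (h z * h z) / 2 = S1 / 2 := by
    rw [hS1, Finset.sum_div]
    apply Finset.sum_congr rfl
    intro z _
    rw [← Finset.sum_div, Finset.sum_mul]
  have e2 : ∑ z ∈ F, ∑ z' ∈ F, w z z' * (h z' * h z') / 2 = S1 / 2 := by
    rw [Finset.sum_comm, hS1, Finset.sum_div]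
    apply Finset.sum_congr rfl
    intro z _
    rw [← Finset.sum_div, Finset.sum_mul]
    congr 1
    apply Finset.sum_congr rfl
    intro z' _
    rw [hsymm z' z]
  have e3 : ∑ z ∈ F, ∑ z' ∈ F, -(w z z' * (h z * h z) / 2 + w z z' * (h z' * h z') / 2)
      = -(S1/2) - S1/2 := by
    have egen : ∑ z ∈ F, ∑ z' ∈ F, -(w z z' * (h z * h z) / 2 + w z z' * (h z' * h z') / 2)
        = -(∑ z ∈ F, ∑ z' ∈ F, w z z' * (h z * h z) / 2)
          - ∑ z ∈ F, ∑ z' ∈ F, w z z' * (h z' * h z') / 2 := by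
      simp only [neg_add, Finset.sum_add_distrib, Finset.sum_neg_distrib]
      ring
    rw [egen, e1, e2]
  rw [e3]
  have hS1le : S1 ≤ ∑ z ∈ F, piw w N z * (h z * h z) := by
    apply Finset.sum_le_sum
    intro z _
    exact mul_le_mul_of_nonneg_right (wrow_le w N hnn hsupp F z) (mul_self_nonneg (h z))
  linarith

end WAux

namespace WAux

variable {V : Type} (w : V → V → ℝ) (N : V → Finset V)

lemma quad0_nonneg (hsymm : ∀ u v, w u v = w v u) (hnn : ∀ u v, 0 ≤ w u v)
    (hsupp : ∀ u v, v ∈ N u ↔ w u v ≠ 0) (hπ : ∀ u, 0 < piw w N u)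
    (F : Finset V) (h : V → ℝ) :
    0 ≤ ∑ z ∈ F, ∑ z' ∈ F, piw w N z * wStep w N z z' * h z * h z' := by
  have hstep : ∀ z z' : V, piw w N z * wStep w N z z' * h z * h z'
      = (if z = z' then piw w N z * h z * h z' / 2 else 0) + w z z' * h z * h z' / 2 := by
    intro z z'
    unfold wStep
    have hz := (hπ z).ne'
    unfold piw at *
    by_cases hzz : z = z'
    · rw [if_pos hzz, if_pos hzz]; field_simp
    · rw [if_neg hzz, if_neg hzz]; field_simp; ring
  simp only [hstep, Finset.sum_add_distrib]
  have ediag : ∀ z ∈ F, ∑ z' ∈ F, (if z = z' then piw w N z * h z * h z' / 2 else 0)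
      = piw w N z * h z * h z / 2 := by
    intro z hz
    rw [Finset.sum_ite_eq F z (fun z' => piw w N z * h z * h z' / 2), if_pos hz]
  rw [Finset.sum_congr rfl ediag]
  have h1 : ∑ z ∈ F, piw w N z * h z * h z / 2
      = (∑ z ∈ F, piw w N z * (h z * h z)) / 2 := by
    rw [Finset.sum_div]; apply Finset.sum_congr rfl; intro z _; ring
  have h2 : ∑ z ∈ F, ∑ z' ∈ F, w z z' * h z * h z' / 2
      = (∑ z ∈ F, ∑ z' ∈ F, w z z' * h z * h z') / 2 := by
    rw [Finset.sum_div]; apply Finset.sum_congr rfl; intro z _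
    rw [Finset.sum_div]
  rw [h1, h2]
  have := offdiag_ge w N hsymm hnn hsupp F h
  linarith

/-- the symmetric quadratic form of one lazy step -/
noncomputable def qform (F : Finset V) (f g : V → ℝ) : ℝ :=
  ∑ z ∈ F, ∑ z' ∈ F, f z * wStep w N z z' * g z' / piw w N z'

lemma qform_nonneg (hsymm : ∀ u v, w u v = w v u) (hnn : ∀ u v, 0 ≤ w u v)
    (hsupp : ∀ u v, v ∈ N u ↔ w u v ≠ 0) (hπ : ∀ u, 0 < piw w N u)
    (F : Finset V) (f : V → ℝ) : 0 ≤ qform w N F f f := by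
  have e : qform w N F f f = ∑ z ∈ F, ∑ z' ∈ F,
      piw w N z * wStep w N z z' * (f z / piw w N z) * (f z' / piw w N z') := by
    unfold qform
    apply Finset.sum_congr rfl; intro z _
    apply Finset.sum_congr rfl; intro z' _
    have hz := (hπ z).ne'
    have hz' := (hπ z').ne'
    field_simp
  rw [e]
  exact quad0_nonneg w N hsymm hnn hsupp hπ F (fun z => f z / piw w N z)

lemma qform_symm (hsymm : ∀ u v, w u v = w v u) (hπ : ∀ u, 0 < piw w N u)
    (F : Finset V) (f g : V → ℝ) : qform w N F f g = qform w N F g f := by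
  unfold qform
  rw [Finset.sum_comm]
  apply Finset.sum_congr rfl; intro z _
  apply Finset.sum_congr rfl; intro z' _
  rw [div_eq_div_iff (hπ z).ne' (hπ z').ne']
  linear_combination (f z' * g z) * detailed w N hsymm hπ z' z

lemma qform_add_left (F : Finset V) (f f' g : V → ℝ) :
    qform w N F (fun z => f z + f' z) g = qform w N F f g + qform w N F f' g := by
  unfold qform
  rw [← Finset.sum_add_distrib]
  apply Finset.sum_congr rfl; intro z _
  rw [← Finset.sum_add_distrib]
  apply Finset.sum_congr rfl; intro z' _
  ring

lemma qform_smul_left (F : Finset V) (l : ℝ) (f g : V → ℝ) :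
    qform w N F (fun z => l * f z) g = l * qform w N F f g := by
  unfold qform
  rw [Finset.mul_sum]
  apply Finset.sum_congr rfl; intro z _
  rw [Finset.mul_sum]
  apply Finset.sum_congr rfl; intro z' _
  ring

lemma discrim_le {A B C : ℝ} (hC : 0 ≤ C) (h : ∀ l : ℝ, 0 ≤ A + 2*l*B + l^2*C) :
    B^2 ≤ A*C := by
  rcases eq_or_lt_of_le hC with hC0 | hC0
  · have hB : B = 0 := by
      by_contra hB
      have h1 := h (-(A+1)/(2*B))
      rw [← hC0] at h1
      have hB2 : (2*B) ≠ 0 := by intro hc; apply hB; linarith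
      have h2 : 2*(-(A+1)/(2*B))*B = -(A+1) := by
        field_simp
      rw [h2] at h1
      simp only [mul_zero] at h1
      linarith
    rw [hB, ← hC0]; norm_num
  · have h1 := h (-B/C)
    have h2 : A + 2 * (-B/C) * B + (-B/C)^2 * C = A - B^2/C := by
      field_simp; ring
    rw [h2] at h1
    rw [← sub_nonneg]
    have : A * C - B^2 = (A - B^2/C) * C := by field_simp
    rw [this]
    positivity

lemma qform_cauchy (hsymm : ∀ u v, w u v = w v u) (hnn : ∀ u v, 0 ≤ w u v)
    (hsupp : ∀ u v, v ∈ N u ↔ w u v ≠ 0) (hπ : ∀ u, 0 < piw w N u)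
    (F : Finset V) (f g : V → ℝ) :
    qform w N F f g ^ 2 ≤ qform w N F f f * qform w N F g g := by
  apply discrim_le (qform_nonneg w N hsymm hnn hsupp hπ F g)
  intro l
  have expand : qform w N F (fun z => f z + l * g z) (fun z => f z + l * g z)
      = qform w N F f f + 2*l*(qform w N F f g) + l^2 * qform w N F g g := by
    rw [qform_add_left, qform_smul_left]
    have e1 : qform w N F f (fun z => f z + l * g z)
        = qform w N F f f + l * qform w N F f g := by
      rw [qform_symm w N hsymm hπ F f, qform_add_left, qform_smul_left,
        qform_symm w N hsymm hπ F f g]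
    have e2 : qform w N F g (fun z => f z + l * g z)
        = qform w N F g f + l * qform w N F g g := by
      rw [qform_symm w N hsymm hπ F g, qform_add_left, qform_smul_left,
        qform_symm w N hsymm hπ F f g]
    rw [e1, e2, qform_symm w N hsymm hπ F g f]
    ring
  rw [← expand]
  exact qform_nonneg w N hsymm hnn hsupp hπ F _

end WAux

namespace WAux

variable {V : Type} (w : V → V → ℝ) (N : V → Finset V)

lemma B_formula (hsymm : ∀ u v, w u v = w v u) (hloop : ∀ u, w u u = 0)
    (hsupp : ∀ u v, v ∈ N u ↔ w u v ≠ 0) (hπ : ∀ u, 0 < piw w N u)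
    (m n : ℕ) (x : V) (F : Finset V) (hF : ball N m x ⊆ F) :
    piw w N x * wKernel w N (m+n) x x
      = ∑ z ∈ F, (piw w N x * wKernel w N m x z) * (piw w N x * wKernel w N n x z)
          / piw w N z := by
  rw [chapman w N hsymm hloop hsupp m n x x F hF, Finset.mul_sum]
  apply Finset.sum_congr rfl
  intro z _
  have hrev : piw w N x * wKernel w N n x z = piw w N z * wKernel w N n z x :=
    reversible w N hsymm hloop hsupp hπ n x z
  rw [eq_div_iff (hπ z).ne']
  linear_combination (-(piw w N x * wKernel w N m x z)) * hrev

lemma Q_formula (hsymm : ∀ u v, w u v = w v u) (hloop : ∀ u, w u u = 0)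
    (hsupp : ∀ u v, v ∈ N u ↔ w u v ≠ 0) (hπ : ∀ u, 0 < piw w N u)
    (m n : ℕ) (x : V) (F : Finset V) (hF1 : ball N m x ⊆ F)
    (hF2 : ∀ z ∈ ball N m x, insert z (N z) ⊆ F) :
    piw w N x * wKernel w N (m+n+1) x x
      = qform w N F (fun z => piw w N x * wKernel w N m x z)
          (fun z => piw w N x * wKernel w N n x z) := by
  have key : ∀ z z' : V, (piw w N x * wKernel w N m x z) * wStep w N z z'
        * (piw w N x * wKernel w N n x z') / piw w N z'
      = piw w N x * (wKernel w N m x z * (wStep w N z z' * wKernel w N n z' x)) := by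
    intro z z'
    have hrev : piw w N x * wKernel w N n x z' = piw w N z' * wKernel w N n z' x :=
      reversible w N hsymm hloop hsupp hπ n x z'
    rw [div_eq_iff (hπ z').ne']
    linear_combination (piw w N x * wKernel w N m x z * wStep w N z z') * hrev
  unfold qform
  have e0 : m + n + 1 = m + (n+1) := by ring
  rw [e0, chapman w N hsymm hloop hsupp m (n+1) x x (ball N m x) (le_refl _), Finset.mul_sum]
  rw [(Finset.sum_subset hF1 ?van1)]
  case van1 =>
    intro z _ hz
    have h0 : wKernel w N m x z = 0 := by
      by_contra hc; exact hz (support w N hsymm hloop hsupp m x z hc)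
    simp [h0]
  apply Finset.sum_congr rfl
  intro z hzF
  show piw w N x * (wKernel w N m x z * wKernel w N (n+1) z x)
      = ∑ z' ∈ F, (piw w N x * wKernel w N m x z) * wStep w N z z'
          * (piw w N x * wKernel w N n x z') / piw w N z'
  by_cases hz : z ∈ ball N m x
  · rw [← (Finset.sum_subset (hF2 z hz) ?van2)]
    case van2 =>
      intro z' _ hz'
      rw [key z z', step_eq_zero w N hsupp hz']
      ring
    rw [Finset.sum_congr rfl (fun z' _ => key z z'), ← Finset.mul_sum, ← Finset.mul_sum]
    have hdef : wKernel w N (n+1) z x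
        = ∑ z' ∈ insert z (N z), wStep w N z z' * wKernel w N n z' x := rfl
    rw [hdef]
  · have h0 : wKernel w N m x z = 0 := by
      by_contra hc; exact hz (support w N hsymm hloop hsupp m x z hc)
    simp [h0]

end WAux

namespace WAux

variable {V : Type} (w : V → V → ℝ) (N : V → Finset V)

lemma nbhd_subset (m : ℕ) (x : V) :
    ∀ z ∈ ball N m x, insert z (N z) ⊆ ball N (m+1) x := by
  intro z hz a ha
  simp only [ball, Finset.mem_biUnion]
  exact ⟨z, hz, ha⟩

lemma logconvex (hsymm : ∀ u v, w u v = w v u) (hnn : ∀ u v, 0 ≤ w u v)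
    (hloop : ∀ u, w u u = 0) (hsupp : ∀ u v, v ∈ N u ↔ w u v ≠ 0)
    (hπ : ∀ u, 0 < piw w N u) (x : V) (t : ℕ) :
    wKernel w N (t+1) x x ^ 2 ≤ wKernel w N t x x * wKernel w N (t+2) x x := by
  have hp2 : (0:ℝ) < piw w N x ^ 2 := pow_pos (hπ x) 2
  have key : (piw w N x * wKernel w N (t+1) x x) ^ 2
      ≤ (piw w N x * wKernel w N t x x) * (piw w N x * wKernel w N (t+2) x x) := by
    rcases Nat.even_or_odd t with ⟨m, hm⟩ | ⟨m, hm⟩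
    · -- even: t = m + m
      set F := ball N (m+1) x with hF
      have hs1 : ball N m x ⊆ F := ball_mono N (Nat.le_succ m) x
      have hs2 : ball N (m+1) x ⊆ F := Finset.Subset.refl _
      have e0 : t = m + m := by omega
      rw [e0]
      rw [show m+m+1 = m+(m+1) from by omega, show m+m+2 = (m+1)+(m+1) from by omega]
      rw [B_formula w N hsymm hloop hsupp hπ m m x F hs1,
        B_formula w N hsymm hloop hsupp hπ m (m+1) x F hs1,
        B_formula w N hsymm hloop hsupp hπ (m+1) (m+1) x F hs2]
      have hsq : ∀ z : V, Real.sqrt (piw w N z) * Real.sqrt (piw w N z) = piw w N z :=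
        fun z => Real.mul_self_sqrt (le_of_lt (hπ z))
      have ef : ∀ z ∈ F, (piw w N x * wKernel w N m x z)
          * (piw w N x * wKernel w N m x z) / piw w N z
          = (piw w N x * wKernel w N m x z / Real.sqrt (piw w N z)) ^ 2 := by
        intro z _
        rw [div_pow, Real.sq_sqrt (hπ z).le]
        ring
      have eg : ∀ z ∈ F, (piw w N x * wKernel w N (m+1) x z)
          * (piw w N x * wKernel w N (m+1) x z) / piw w N z
          = (piw w N x * wKernel w N (m+1) x z / Real.sqrt (piw w N z)) ^ 2 := by
        intro z _
        rw [div_pow, Real.sq_sqrt (hπ z).le]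
        ring
      have efg : ∀ z ∈ F, (piw w N x * wKernel w N m x z)
          * (piw w N x * wKernel w N (m+1) x z) / piw w N z
          = (piw w N x * wKernel w N m x z / Real.sqrt (piw w N z))
            * (piw w N x * wKernel w N (m+1) x z / Real.sqrt (piw w N z)) := by
        intro z _
        rw [div_mul_div_comm, hsq z]
      rw [Finset.sum_congr rfl ef, Finset.sum_congr rfl eg, Finset.sum_congr rfl efg]
      exact Finset.sum_mul_sq_le_sq_mul_sq F _ _
    · -- odd: t = 2*m + 1
      set F := ball N (m+2) x with hF
      have hs1 : ball N m x ⊆ F := ball_mono N (by omega) x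
      have hs2 : ball N (m+1) x ⊆ F := ball_mono N (by omega) x
      have hn1 : ∀ z ∈ ball N m x, insert z (N z) ⊆ F :=
        fun z hz => (nbhd_subset N m x z hz).trans hs2
      have hn2 : ∀ z ∈ ball N (m+1) x, insert z (N z) ⊆ F :=
        fun z hz => nbhd_subset N (m+1) x z hz
      have e0 : t = m + m + 1 := by omega
      rw [e0]
      rw [show m+m+1+2 = (m+1)+(m+1)+1 from by omega,
        show m+m+1+1 = m+(m+1)+1 from by omega]
      rw [Q_formula w N hsymm hloop hsupp hπ m m x F hs1 hn1,
        Q_formula w N hsymm hloop hsupp hπ m (m+1) x F hs1 hn1,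
        Q_formula w N hsymm hloop hsupp hπ (m+1) (m+1) x F hs2 hn2]
      exact qform_cauchy w N hsymm hnn hsupp hπ F _ _
  have h' : piw w N x ^ 2 * (wKernel w N (t+1) x x ^ 2)
      ≤ piw w N x ^ 2 * (wKernel w N t x x * wKernel w N (t+2) x x) := by
    have eL : piw w N x ^ 2 * (wKernel w N (t+1) x x ^ 2)
        = (piw w N x * wKernel w N (t+1) x x) ^ 2 := by ring
    have eR : piw w N x ^ 2 * (wKernel w N t x x * wKernel w N (t+2) x x)
        = (piw w N x * wKernel w N t x x) * (piw w N x * wKernel w N (t+2) x x) := by ring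
    rw [eL, eR]
    exact key
  exact le_of_mul_le_mul_left h' hp2

lemma diag_antitone (hsymm : ∀ u v, w u v = w v u) (hnn : ∀ u v, 0 ≤ w u v)
    (hloop : ∀ u, w u u = 0) (hsupp : ∀ u v, v ∈ N u ↔ w u v ≠ 0)
    (hπ : ∀ u, 0 < piw w N u) (x : V) :
    ∀ t, wKernel w N (t+1) x x ≤ wKernel w N t x x := by
  set A := fun t => wKernel w N t x x with hA
  have hpos : ∀ t, 0 < A t := fun t => diag_pos w N hnn hloop t x
  have hle1 : ∀ t, A t ≤ 1 := fun t => kernel_le_one w N hnn hloop hsupp hπ t x x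
  have hconv : ∀ t, A (t+1) ^ 2 ≤ A t * A (t+2) :=
    fun t => logconvex w N hsymm hnn hloop hsupp hπ x t
  by_contra hc
  push_neg at hc
  obtain ⟨T, hT⟩ := hc
  set r := A (T+1) / A T with hr
  have hr1 : 1 < r := (one_lt_div (hpos T)).2 hT
  have hratio : ∀ k, r ≤ A (T+k+1) / A (T+k) := by
    intro k
    induction k with
    | zero => exact le_refl _
    | succ k ih =>
      refine le_trans ih ?_
      have ee : T + (k+1) = T + k + 1 := by omega
      rw [ee, div_le_div_iff₀ (hpos (T+k)) (hpos (T+k+1))]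
      have hc := hconv (T+k)
      have e2 : T + k + 2 = T + k + 1 + 1 := by omega
      rw [e2] at hc
      nlinarith [hpos (T+k+1)]
  have hgrow : ∀ k, r ^ k * A T ≤ A (T+k) := by
    intro k
    induction k with
    | zero => simp
    | succ k ih =>
      have h1 : r * A (T+k) ≤ A (T+k+1) := by
        have := hratio k
        rw [le_div_iff₀ (hpos (T+k))] at this
        linarith
      have e : T + (k+1) = T + k + 1 := by omega
      rw [e]
      calc r ^ (k+1) * A T = r * (r ^ k * A T) := by ring
        _ ≤ r * A (T+k) := by
            have : (0:ℝ) < r := lt_trans one_pos hr1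
            nlinarith [ih]
        _ ≤ A (T+k+1) := h1
  obtain ⟨k, hk⟩ := pow_unbounded_of_one_lt (1 / A T) hr1
  have : 1 < r ^ k * A T := by
    rw [div_lt_iff₀ (hpos T)] at hk
    linarith
  linarith [hgrow k, hle1 (T+k)]

lemma diag_mono (hsymm : ∀ u v, w u v = w v u) (hnn : ∀ u v, 0 ≤ w u v)
    (hloop : ∀ u, w u u = 0) (hsupp : ∀ u v, v ∈ N u ↔ w u v ≠ 0)
    (hπ : ∀ u, 0 < piw w N u) (x : V) {t t' : ℕ} (h : t ≤ t') :
    wKernel w N t' x x ≤ wKernel w N t x x := by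
  induction t' with
  | zero => rw [Nat.le_zero.1 h]
  | succ t' ih =>
    rcases Nat.lt_or_ge t (t'+1) with h1 | h1
    · exact le_trans (diag_antitone w N hsymm hnn hloop hsupp hπ x t')
        (ih (Nat.lt_succ_iff.1 h1))
    · rw [Nat.le_antisymm h h1]

end WAux

namespace WAux

variable {V : Type} (w : V → V → ℝ) (N : V → Finset V)

lemma isolated (hloop : ∀ u, w u u = 0) {u : V} (hNu : N u = ∅) (t : ℕ) {v : V}
    (hv : v ≠ u) : wKernel w N t u v = 0 := by
  induction t with
  | zero =>
    show (if u = v then (1:ℝ) else 0) = 0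
    rw [if_neg (Ne.symm hv)]
  | succ t ih =>
    show (∑ z ∈ insert u (N u), wStep w N u z * wKernel w N t z v) = 0
    rw [hNu, Finset.sum_insert (Finset.notMem_empty u), Finset.sum_empty, ih]
    ring

end WAux

/-- On a connected weighted graph with positive weights bounded above and below,
the on-diagonal lazy heat kernels at any two vertices are comparable, uniformly in
time (for `t` at least twice the distance from `x` to `y`, the distance being
witnessed by a time `s` with `p(x,y;s) ≠ 0`). -/
theorem stmt9 (V : Type) (w : V → V → ℝ) (N : V → Finset V) (a b : ℝ)
    (hsymm : ∀ u v, w u v = w v u) (hnn : ∀ u v, 0 ≤ w u v)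
    (hloop : ∀ u, w u u = 0) (hsupp : ∀ u v, v ∈ N u ↔ w u v ≠ 0)
    (ha : 0 < a) (hbd : ∀ u v, w u v ≠ 0 → a ≤ w u v ∧ w u v ≤ b)
    (hirr : ∀ u v, ∃ t, wKernel w N t u v ≠ 0) :
    ∀ x y : V, ∀ s : ℕ, wKernel w N s x y ≠ 0 →
      ∃ c : ℝ, 0 < c ∧ ∃ C : ℝ, 0 < C ∧
        ∀ t : ℕ, 2 * s ≤ t →
          c * wKernel w N t y y ≤ wKernel w N t x x ∧
          wKernel w N t x x ≤ C * wKernel w N t y y := by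
  intro x y s hs
  by_cases hxy : x = y
  · subst hxy
    exact ⟨1, one_pos, 1, one_pos, fun t _ => ⟨by rw [one_mul], by rw [one_mul]⟩⟩
  -- every vertex has a neighbour, hence positive weight
  have hπ : ∀ u, 0 < WAux.piw w N u := by
    intro u
    have hne : (N u).Nonempty := by
      rcases Finset.eq_empty_or_nonempty (N u) with hNu | hne
      · exfalso
        by_cases hux : u = x
        · subst hux
          obtain ⟨t, ht⟩ := hirr u y
          exact ht (WAux.isolated w N hloop hNu t (Ne.symm hxy))
        · obtain ⟨t, ht⟩ := hirr u x
          exact ht (WAux.isolated w N hloop hNu t (Ne.symm hux))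
      · exact hne
    obtain ⟨z, hz⟩ := hne
    have hwz : 0 < w u z := lt_of_le_of_ne (hnn u z) (Ne.symm ((hsupp u z).1 hz))
    have : w u z ≤ WAux.piw w N u :=
      Finset.single_le_sum (f := fun z => w u z) (fun i _ => hnn u i) hz
    linarith
  have hxy_pos : 0 < wKernel w N s x y :=
    lt_of_le_of_ne (WAux.kernel_nonneg w N hnn s x y) (Ne.symm hs)
  have hyx_pos : 0 < wKernel w N s y x := by
    have hrev := WAux.reversible w N hsymm hloop hsupp hπ s x y
    by_contra hc
    push_neg at hc
    have h0 : wKernel w N s y x = 0 :=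
      le_antisymm hc (WAux.kernel_nonneg w N hnn s y x)
    rw [h0, mul_zero] at hrev
    have := mul_pos (hπ x) hxy_pos
    linarith
  set c : ℝ := wKernel w N s x y * wKernel w N s y x with hc
  have hcpos : 0 < c := mul_pos hxy_pos hyx_pos
  refine ⟨c, hcpos, c⁻¹, inv_pos.2 hcpos, ?_⟩
  intro t ht
  set k := t - 2*s with hk
  have hts : t = s + (k + s) := by omega
  -- lower bound : K t x x ≥ K s x y * K k y y * K s y x ≥ c * K t y y
  have low : wKernel w N s x y * (wKernel w N k y y * wKernel w N s y x)
      ≤ wKernel w N t x x := by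
    rw [hts]
    calc wKernel w N s x y * (wKernel w N k y y * wKernel w N s y x)
        ≤ wKernel w N s x y * wKernel w N (k+s) y x := by
          apply mul_le_mul_of_nonneg_left _ (le_of_lt hxy_pos)
          exact WAux.pick_term w N hsymm hnn hloop hsupp k s y x y
      _ ≤ wKernel w N (s + (k+s)) x x :=
          WAux.pick_term w N hsymm hnn hloop hsupp s (k+s) x x y
  have hyy_mono : wKernel w N t y y ≤ wKernel w N k y y :=
    WAux.diag_mono w N hsymm hnn hloop hsupp hπ y (by omega)
  constructor
  · calc c * wKernel w N t y y ≤ c * wKernel w N k y y :=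
        mul_le_mul_of_nonneg_left hyy_mono (le_of_lt hcpos)
      _ = wKernel w N s x y * (wKernel w N k y y * wKernel w N s y x) := by
          rw [hc]; ring
      _ ≤ wKernel w N t x x := low
  · -- upper bound, by symmetry
    have low2 : wKernel w N s y x * (wKernel w N k x x * wKernel w N s x y)
        ≤ wKernel w N t y y := by
      rw [hts]
      calc wKernel w N s y x * (wKernel w N k x x * wKernel w N s x y)
          ≤ wKernel w N s y x * wKernel w N (k+s) x y := by
            apply mul_le_mul_of_nonneg_left _ (le_of_lt hyx_pos)
            exact WAux.pick_term w N hsymm hnn hloop hsupp k s x y x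
        _ ≤ wKernel w N (s + (k+s)) y y :=
            WAux.pick_term w N hsymm hnn hloop hsupp s (k+s) y y x
    have hxx_mono : wKernel w N t x x ≤ wKernel w N k x x :=
      WAux.diag_mono w N hsymm hnn hloop hsupp hπ x (by omega)
    have step1 : c * wKernel w N t x x ≤ wKernel w N t y y := by
      calc c * wKernel w N t x x ≤ c * wKernel w N k x x :=
          mul_le_mul_of_nonneg_left hxx_mono (le_of_lt hcpos)
        _ = wKernel w N s y x * (wKernel w N k x x * wKernel w N s x y) := by
            rw [hc]; ring
        _ ≤ wKernel w N t y y := low2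
    rw [inv_mul_eq_div, le_div_iff₀ hcpos, mul_comm (wKernel w N t x x) c]
    exact step1
end

section
/- Define Q_{l,m,i} = {n ∈ Z^22 : |n_i mod l| ≤ m} (where n mod l ∈ {-⌊(l-1)/2⌋,…,⌊l/2⌋}) and Q_{l,m} = ⋃_{I ⊆ {1,…,22}, |I|=19} ⋂_{i∈I} Q_{l,m,i}, for integers m < l/2. Then the induced subgraph of Z^22 on Q_{l,m} is connected. -/
open scoped Classical

/-- The standard lattice graph on `ℤ^d`: two vertices are adjacent iff their
`ℓ¹`-distance is `1`. -/
def latticeGraph (d : ℕ) : SimpleGraph (Fin d → ℤ) where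
  Adj x y := ∑ i, (x i - y i).natAbs = 1
  symm := by
    constructor
    intro x y h
    beta_reduce at h ⊢
    rw [show (∑ i, (y i - x i).natAbs) = ∑ i, (x i - y i).natAbs from
      Finset.sum_congr rfl fun i _ => by rw [← Int.natAbs_neg, neg_sub]]
    exact h
  loopless := by constructor; intro x h; simp at h

/-- Rough isometry between two graphs, with the shortest-path metrics. -/
def RoughIsom {V W : Type} (G : SimpleGraph V) (H : SimpleGraph W) : Prop :=
  ∃ C : ℝ, 1 ≤ C ∧ ∃ φ : V → W,
    (∀ x y : V,
      (1 / C) * (G.dist x y : ℝ) - C ≤ (H.dist (φ x) (φ y) : ℝ) ∧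
      (H.dist (φ x) (φ y) : ℝ) ≤ C * (G.dist x y : ℝ) + C) ∧
    (∀ w : W, ∃ x : V, (H.dist w (φ x) : ℝ) ≤ C)

/-- The heat kernel of the lazy simple random walk on a locally finite graph:
at each step the walker stays put with probability `1/2` and otherwise moves to a
uniformly chosen neighbour. -/
noncomputable def lazyKernel {V : Type} (G : SimpleGraph V)
    (hfin : ∀ v, Fintype (G.neighborSet v)) : ℕ → V → V → ℝ
  | 0, u, v => if u = v then 1 else 0
  | t + 1, u, v =>
      (1 / 2) * lazyKernel G hfin t u v +
        ∑ z ∈ @SimpleGraph.neighborFinset V G u (hfin u),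
          (1 / (2 * (@SimpleGraph.degree V G u (hfin u) : ℝ))) * lazyKernel G hfin t z v

/-- `Q_{l,m}`: the union over all 19-element index sets `I ⊆ {1,…,22}` of the sets
`⋂_{i∈I} {n ∈ ℤ²² : |n_i mod l| ≤ m}`, using the balanced residue `Int.bmod`. -/
def Qset (l m : ℕ) : Set (Fin 22 → ℤ) :=
  {n | ∃ I : Finset (Fin 22), I.card = 19 ∧ ∀ i ∈ I, |Int.bmod (n i) l| ≤ (m : ℤ)}

lemma zero_good (l m : ℕ) : |Int.bmod 0 l| ≤ (m : ℤ) := by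
  have : Int.bmod 0 l = 0 := by
    simp only [Int.bmod, Int.zero_emod]
    split_ifs <;> omega
  simp [this]

lemma exists19 (i : Fin 22) : ∃ I : Finset (Fin 22), I.card = 19 ∧ i ∉ I := by
  obtain ⟨I, hsub, hcard⟩ := Finset.exists_subset_card_eq
    (s := Finset.univ.erase i) (n := 19) (by simp [Finset.card_erase_of_mem])
  exact ⟨I, hcard, fun h => (Finset.mem_erase.mp (hsub h)).1 rfl⟩

lemma adj_update (n : Fin 22 → ℤ) (i : Fin 22) (a b : ℤ) (hab : (a - b).natAbs = 1) :
    (latticeGraph 22).Adj (Function.update n i a) (Function.update n i b) := by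
  show (∑ j, (Function.update n i a j - Function.update n i b j).natAbs) = 1
  rw [Finset.sum_eq_single_of_mem i (Finset.mem_univ i)]
  · simpa using hab
  · intro j _ hj
    simp [Function.update_of_ne hj]

lemma reach_of_eq {l m : ℕ} {x y : Fin 22 → ℤ} (h : x = y)
    (hx : x ∈ Qset l m) (hy : y ∈ Qset l m) :
    ((latticeGraph 22).induce (Qset l m)).Reachable ⟨x, hx⟩ ⟨y, hy⟩ := by
  cases h; exact SimpleGraph.Reachable.refl _

lemma move_aux (l m : ℕ) (n : Fin 22 → ℤ) (i : Fin 22)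
    (H : ∀ c : ℤ, Function.update n i c ∈ Qset l m) :
    ∀ (k : ℕ) (a b : ℤ), (b - a).natAbs = k →
      ((latticeGraph 22).induce (Qset l m)).Reachable
        ⟨Function.update n i a, H a⟩ ⟨Function.update n i b, H b⟩ := by
  intro k
  induction k with
  | zero =>
    intro a b hk
    have : a = b := by omega
    subst this; exact SimpleGraph.Reachable.refl _
  | succ k ih =>
    intro a b hk
    rcases lt_or_gt_of_ne (show a ≠ b by omega) with hlt | hgt
    · have hadj : ((latticeGraph 22).induce (Qset l m)).Adj
          ⟨Function.update n i a, H a⟩ ⟨Function.update n i (a + 1), H (a + 1)⟩ :=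
        adj_update n i a (a + 1) (by omega)
      exact hadj.reachable.trans (ih (a + 1) b (by omega))
    · have hadj : ((latticeGraph 22).induce (Qset l m)).Adj
          ⟨Function.update n i a, H a⟩ ⟨Function.update n i (a - 1), H (a - 1)⟩ :=
        adj_update n i a (a - 1) (by omega)
      exact hadj.reachable.trans (ih (a - 1) b (by omega))

lemma move (l m : ℕ) (n : Fin 22 → ℤ) (i : Fin 22)
    (H : ∀ c : ℤ, Function.update n i c ∈ Qset l m) (hn : n ∈ Qset l m) (b : ℤ) :
    ((latticeGraph 22).induce (Qset l m)).Reachable ⟨n, hn⟩ ⟨Function.update n i b, H b⟩ := by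
  have h1 := move_aux l m n i H ((b - n i).natAbs) (n i) b rfl
  exact (reach_of_eq (Function.update_eq_self i n).symm hn (H (n i))).trans h1

lemma phase1 (l m : ℕ) (I : Finset (Fin 22)) (hI : I.card = 19)
    (n : Fin 22 → ℤ) (hg : ∀ i ∈ I, |Int.bmod (n i) l| ≤ (m : ℤ)) :
    ∀ S : Finset (Fin 22), (∀ i ∈ S, i ∉ I) →
      ∀ (h1 : n ∈ Qset l m) (h2 : (fun j => if j ∈ S then 0 else n j) ∈ Qset l m),
      ((latticeGraph 22).induce (Qset l m)).Reachable
        ⟨n, h1⟩ ⟨fun j => if j ∈ S then 0 else n j, h2⟩ := by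
  intro S
  induction S using Finset.induction_on with
  | empty =>
    intro _ h1 h2
    exact reach_of_eq (by funext j; simp) h1 h2
  | @insert a S ha ih =>
    intro hdisj h1 h2
    have haI : a ∉ I := hdisj a (Finset.mem_insert_self a S)
    set p : Fin 22 → ℤ := fun j => if j ∈ S then 0 else n j with hp_def
    have hpI : ∀ i ∈ I, p i = n i := fun i hi => by
      have hiS : i ∉ S := fun hs => hdisj i (Finset.mem_insert_of_mem hs) hi
      simp [hp_def, hiS]
    have hp : p ∈ Qset l m := ⟨I, hI, fun i hi => by rw [hpI i hi]; exact hg i hi⟩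
    have H : ∀ c : ℤ, Function.update p a c ∈ Qset l m := fun c =>
      ⟨I, hI, fun i hi => by
        rw [Function.update_of_ne (by rintro rfl; exact haI hi), hpI i hi]
        exact hg i hi⟩
    have r1 := ih (fun i hi => hdisj i (Finset.mem_insert_of_mem hi)) h1 hp
    have r2 := move l m p a H hp 0
    have heq : Function.update p a 0 = fun j => if j ∈ insert a S then 0 else n j := by
      funext j
      by_cases hj : j = a
      · subst hj; simp
      · simp [Function.update_of_ne hj, hp_def, hj, Finset.mem_insert]
    exact r1.trans (r2.trans (reach_of_eq heq (H 0) h2))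

lemma phase2 (l m : ℕ) (n : Fin 22 → ℤ) (hg : ∀ i, |Int.bmod (n i) l| ≤ (m : ℤ)) :
    ∀ S : Finset (Fin 22),
      ∀ (h1 : n ∈ Qset l m) (h2 : (fun j => if j ∈ S then 0 else n j) ∈ Qset l m),
      ((latticeGraph 22).induce (Qset l m)).Reachable
        ⟨n, h1⟩ ⟨fun j => if j ∈ S then 0 else n j, h2⟩ := by
  intro S
  induction S using Finset.induction_on with
  | empty =>
    intro h1 h2
    exact reach_of_eq (by funext j; simp) h1 h2
  | @insert a S ha ih =>
    intro h1 h2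
    set p : Fin 22 → ℤ := fun j => if j ∈ S then 0 else n j with hp_def
    have hpg : ∀ i, |Int.bmod (p i) l| ≤ (m : ℤ) := by
      intro i
      by_cases hi : i ∈ S
      · simp only [hp_def, if_pos hi]; exact zero_good l m
      · simp only [hp_def, if_neg hi]; exact hg i
    obtain ⟨I, hIcard, haI⟩ := exists19 a
    have hp : p ∈ Qset l m := ⟨I, hIcard, fun i _ => hpg i⟩
    have H : ∀ c : ℤ, Function.update p a c ∈ Qset l m := fun c =>
      ⟨I, hIcard, fun i hi => by
        rw [Function.update_of_ne (by rintro rfl; exact haI hi)]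
        exact hpg i⟩
    have r1 := ih h1 hp
    have r2 := move l m p a H hp 0
    have heq : Function.update p a 0 = fun j => if j ∈ insert a S then 0 else n j := by
      funext j
      by_cases hj : j = a
      · subst hj; simp
      · simp [Function.update_of_ne hj, hp_def, hj, Finset.mem_insert]
    exact r1.trans (r2.trans (reach_of_eq heq (H 0) h2))

/-- The induced subgraph of `ℤ²²` on `Q_{l,m}` is connected (for `m < l/2`). -/
theorem stmt12 (l m : ℕ) (h : 2 * m < l) :
    ((latticeGraph 22).induce (Qset l m)).Connected := by
  obtain ⟨I0, hI0, _⟩ := exists19 0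
  have h0 : (fun _ : Fin 22 => (0 : ℤ)) ∈ Qset l m :=
    ⟨I0, hI0, fun i _ => zero_good l m⟩
  have key : ∀ u : {x // x ∈ Qset l m},
      ((latticeGraph 22).induce (Qset l m)).Reachable u ⟨fun _ => 0, h0⟩ := by
    rintro ⟨n, hn⟩
    obtain ⟨I, hI, hg⟩ := hn
    set p : Fin 22 → ℤ := fun j => if j ∈ Iᶜ then 0 else n j with hp_def
    have hpI : ∀ i ∈ I, p i = n i := fun i hi => by simp [hp_def, hi]
    have hp : p ∈ Qset l m := ⟨I, hI, fun i hi => by rw [hpI i hi]; exact hg i hi⟩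
    have r1 := phase1 l m I hI n hg Iᶜ (fun i hi => by simpa using hi) ⟨I, hI, hg⟩ hp
    have hpg : ∀ i, |Int.bmod (p i) l| ≤ (m : ℤ) := by
      intro i
      by_cases hi : i ∈ I
      · rw [hpI i hi]; exact hg i hi
      · simp only [hp_def, if_pos (Finset.mem_compl.mpr hi)]; exact zero_good l m
    have hz : (fun j => if j ∈ (Finset.univ : Finset (Fin 22)) then 0 else p j) ∈ Qset l m :=
      ⟨I0, hI0, fun i _ => by simp [zero_good l m]⟩
    have r2 := phase2 l m p hpg Finset.univ hp hz
    exact r1.trans (r2.trans (reach_of_eq (by funext j; simp) hz h0))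
  have : Nonempty {x // x ∈ Qset l m} := ⟨⟨fun _ => 0, h0⟩⟩
  exact ⟨fun u v => (key u).trans (key v).symm⟩
end
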